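/- arXiv:2511.09423 — 2 statements merged into one kernel-verified Lean document; each statement's English description precedes it below -/
import Mathlib

section
/- Let n ≥ 1, κ > 0 and ν > 3n/2, and let ρ(h) = Σ_{k ∈ ℤ^n} (κ² + |k|²)^{−ν} cos(2π k·h). Then for every multi-index α with |α| = 2n and every ε with 0 < ε < min(1, ν − 3n/2), there exists a constant C > 0 such that |∂^α ρ(h) − ∂^α ρ(h')| ≤ C ‖h − h'‖^ε for all h, h' ∈ ℝ^n. -/
noncomputable section

/-- Partial derivative in the `i`-th coordinate direction (as a directional/line derivative). -/
def pd {n : ℕ} (i : Fin n) (f : (Fin n → ℝ) → ℝ) : (Fin n → ℝ) → ℝ :=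
  fun x => lineDeriv ℝ f x (Pi.single i 1)

/-- The multi-index partial derivative `∂^α f`, applying `α i` partial derivatives in each
coordinate direction `i`. -/
def mpd {n : ℕ} (α : Fin n → ℕ) (f : (Fin n → ℝ) → ℝ) : (Fin n → ℝ) → ℝ :=
  (List.finRange n).foldr (fun i g => (pd i)^[α i] g) f

/-- The stationary Matérn covariance on the torus `𝕋^n = ℝ^n/ℤ^n`:
`ρ(h) = Σ_{k ∈ ℤ^n} (κ² + |k|²)^{-ν} cos(2π k·h)`. -/
def matRho (n : ℕ) (κ ν : ℝ) : (Fin n → ℝ) → ℝ :=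
  fun h => ∑' k : Fin n → ℤ, (κ ^ 2 + ∑ i, ((k i : ℝ)) ^ 2) ^ (-ν) *
    Real.cos (2 * Real.pi * ∑ i, (k i : ℝ) * h i)


open Real Finset

/-! Differentiating termwise, `∂^β ρ` is again a cosine series: the `k`-th coefficient becomes
`∏ᵢ (2πkᵢ)^{βᵢ} (κ² + |k|²)^{-ν} = O((1 + |k|²)^{|β|/2 - ν})` and the phase is shifted by
`|β|π/2`; this is legitimate as long as the new coefficients are absolutely summable over `ℤⁿ`,
i.e. `|β| + n < 2ν`. Since `|cos x - cos y| ≤ 2^{1-ε} |x - y|^ε`, a term `c_k cos (2π k·h + φ)`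
is `ε`-Hölder with constant `O(|c_k| (1 + |k|²)^{ε/2})`, so `∂^α ρ` is `ε`-Hölder once
`|α| + ε + n < 2ν`, which for `|α| = 2n` follows from `ε < ν - 3n/2`. -/

lemma sq_le_sum_sq {ι : Type*} [Fintype ι] (x : ι → ℝ) (i : ι) : x i ^ 2 ≤ ∑ j, x j ^ 2 :=
  single_le_sum (f := fun j => x j ^ 2) (fun _ _ => sq_nonneg _) (mem_univ i)

lemma summable_one_add_int_sq_rpow_neg {t : ℝ} (ht : 1 < 2 * t) :
    Summable fun m : ℤ => (1 + (m : ℝ) ^ 2) ^ (-t) := by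
  refine .of_norm_bounded_eventually (summable_abs_int_rpow ht) ?_
  filter_upwards [Filter.eventually_cofinite_ne 0] with m hm
  have hm : 0 < |(m : ℝ)| := by positivity
  rw [norm_of_nonneg (by positivity)]
  calc (1 + (m : ℝ) ^ 2) ^ (-t) ≤ (|(m : ℝ)| ^ (2 : ℝ)) ^ (-t) :=
        rpow_le_rpow_of_nonpos (by positivity) (by rw [rpow_two, sq_abs]; linarith) (by linarith)
    _ = |(m : ℝ)| ^ (-(2 * t)) := by rw [← rpow_mul hm.le]; ring_nf

lemma summable_prod_pi_of_nonneg {β : Type*} {f : β → ℝ} (hf₀ : ∀ b, 0 ≤ f b)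
    (hf : Summable f) : ∀ n : ℕ, Summable fun k : Fin n → β => ∏ i, f (k i)
  | 0 => .of_finite
  | n + 1 => by
    have hpair := hf.mul_of_nonneg (summable_prod_pi_of_nonneg hf₀ hf n) hf₀
      fun k => prod_nonneg fun i _ => hf₀ _
    refine (hpair.comp_injective (Fin.consEquiv fun _ => β).symm.injective).congr fun k => ?_
    simp [Fin.prod_univ_succ, Fin.tail]

/-- Comparison with `∏ᵢ (1 + kᵢ²)^{-s/n}`, using `∏ᵢ (1 + kᵢ²) ≤ (1 + |k|²)ⁿ`. -/
lemma summable_one_add_sum_sq_rpow_neg {n : ℕ} {s : ℝ} (hs : n < 2 * s) :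
    Summable fun k : Fin n → ℤ => (1 + ∑ i, (k i : ℝ) ^ 2) ^ (-s) := by
  rcases n.eq_zero_or_pos with rfl | hn
  · exact .of_finite
  have hn : (0 : ℝ) < n := by exact_mod_cast hn
  have ht : 1 < 2 * (s / n) := by rw [mul_div_assoc', lt_div_iff₀ hn]; linarith
  refine .of_nonneg_of_le (fun k => by positivity) (fun k => ?_)
    (summable_prod_pi_of_nonneg (fun m => by positivity) (summable_one_add_int_sq_rpow_neg ht) n)
  have hprod : ∏ i, (1 + (k i : ℝ) ^ 2) ≤ (1 + ∑ i, (k i : ℝ) ^ 2) ^ n := by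
    calc ∏ i, (1 + (k i : ℝ) ^ 2) ≤ ∏ _i : Fin n, (1 + ∑ i, (k i : ℝ) ^ 2) :=
          prod_le_prod (fun i _ => by positivity)
            fun i _ => add_le_add_right (sq_le_sum_sq (fun j => (k j : ℝ)) i) 1
      _ = _ := by simp
  calc (1 + ∑ i, (k i : ℝ) ^ 2) ^ (-s) = ((1 + ∑ i, (k i : ℝ) ^ 2) ^ n) ^ (-(s / n)) := by
        rw [← rpow_natCast, ← rpow_mul (by positivity)]
        field_simp
    _ ≤ (∏ i, (1 + (k i : ℝ) ^ 2)) ^ (-(s / n)) :=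
        rpow_le_rpow_of_nonpos (by positivity) hprod (by linarith)
    _ = ∏ i, (1 + (k i : ℝ) ^ 2) ^ (-(s / n)) :=
        (finsetProd_rpow _ _ (fun i _ => by positivity) _).symm

/-- The coefficient of `cos (2π k·h + |β| π/2)` in the cosine series of `∂^β ρ`. -/
def maternCoeff (n : ℕ) (κ ν : ℝ) (β : Fin n → ℕ) (k : Fin n → ℤ) : ℝ :=
  (∏ i, (2 * π * k i) ^ β i) * (κ ^ 2 + ∑ i, (k i : ℝ) ^ 2) ^ (-ν)

section MaternCoeff

variable {n : ℕ} {κ ν : ℝ}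

lemma maternCoeff_add_single (β : Fin n → ℕ) (i : Fin n) (k : Fin n → ℤ) :
    maternCoeff n κ ν (β + Pi.single i 1) k = 2 * π * k i * maternCoeff n κ ν β k := by
  simp only [maternCoeff, Pi.add_apply, pow_add, prod_mul_distrib, Pi.single_apply, pow_ite,
    pow_one, pow_zero, prod_ite_eq', mem_univ, if_true]
  ring

lemma abs_maternCoeff_le (hκ : 0 < κ) (hν : 0 ≤ ν) (β : Fin n → ℕ) (k : Fin n → ℤ) :
    |maternCoeff n κ ν β k| ≤ (2 * π) ^ (∑ i, β i) * min (κ ^ 2) 1 ^ (-ν) *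
      (1 + ∑ i, (k i : ℝ) ^ 2) ^ ((∑ i, β i : ℕ) / 2 - ν) := by
  set Q := ∑ i, (k i : ℝ) ^ 2
  have hQ : 0 ≤ Q := sum_nonneg fun i _ => sq_nonneg _
  have hprod : |∏ i, (2 * π * k i) ^ β i| ≤
      (2 * π) ^ (∑ i, β i) * (1 + Q) ^ ((∑ i, β i : ℕ) / 2 : ℝ) :=
    calc |∏ i, (2 * π * k i) ^ β i| = ∏ i, (2 * π * |(k i : ℝ)|) ^ β i := by
          simp [abs_prod, abs_mul, abs_of_pos pi_pos]
      _ ≤ ∏ i, (2 * π * √(1 + Q)) ^ β i :=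
          prod_le_prod (fun i _ => by positivity) fun i _ => pow_le_pow_left₀ (by positivity)
            (mul_le_mul_of_nonneg_left
              (abs_le_sqrt (by linarith [sq_le_sum_sq (fun j => (k j : ℝ)) i])) (by positivity)) _
      _ = (2 * π) ^ (∑ i, β i) * (1 + Q) ^ ((∑ i, β i : ℕ) / 2 : ℝ) := by
          rw [prod_pow_eq_pow_sum, mul_pow, ← rpow_natCast √(1 + Q), sqrt_eq_rpow,
            ← rpow_mul (by positivity)]
          ring_nf
  have hdecay : (κ ^ 2 + Q) ^ (-ν) ≤ min (κ ^ 2) 1 ^ (-ν) * (1 + Q) ^ (-ν) := by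
    rw [← mul_rpow (by positivity) (by positivity)]
    refine rpow_le_rpow_of_nonpos (by positivity) ?_ (by linarith)
    nlinarith [min_le_left (κ ^ 2) 1, min_le_right (κ ^ 2) 1]
  calc |maternCoeff n κ ν β k|
      = |∏ i, (2 * π * k i) ^ β i| * (κ ^ 2 + Q) ^ (-ν) := by
        rw [maternCoeff, abs_mul, abs_of_nonneg (rpow_nonneg (by positivity) _)]
    _ ≤ (2 * π) ^ (∑ i, β i) * (1 + Q) ^ ((∑ i, β i : ℕ) / 2 : ℝ) *
          (min (κ ^ 2) 1 ^ (-ν) * (1 + Q) ^ (-ν)) :=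
        mul_le_mul hprod hdecay (by positivity) (by positivity)
    _ = _ := by rw [sub_eq_add_neg, rpow_add (by positivity)]; ring

lemma summable_abs_maternCoeff_mul (hκ : 0 < κ) (β : Fin n → ℕ) {e : ℝ} (he : 0 ≤ e)
    (hβ : (∑ i, β i : ℕ) + e + n < 2 * ν) :
    Summable fun k => |maternCoeff n κ ν β k| * (1 + ∑ i, (k i : ℝ) ^ 2) ^ (e / 2) := by
  have hν : 0 ≤ ν := by linarith [(∑ i, β i : ℕ).cast_nonneg (α := ℝ), n.cast_nonneg (α := ℝ)]
  refine .of_nonneg_of_le (fun k => by positivity) (fun k => ?_)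
    ((summable_one_add_sum_sq_rpow_neg (s := ν - ((∑ i, β i : ℕ) + e) / 2) (by linarith)).mul_left
      ((2 * π) ^ (∑ i, β i) * min (κ ^ 2) 1 ^ (-ν)))
  calc |maternCoeff n κ ν β k| * (1 + ∑ i, (k i : ℝ) ^ 2) ^ (e / 2)
      ≤ (2 * π) ^ (∑ i, β i) * min (κ ^ 2) 1 ^ (-ν) *
          (1 + ∑ i, (k i : ℝ) ^ 2) ^ ((∑ i, β i : ℕ) / 2 - ν) *
          (1 + ∑ i, (k i : ℝ) ^ 2) ^ (e / 2) := by
        gcongr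
        exact abs_maternCoeff_le hκ hν β k
    _ = _ := by rw [mul_assoc, ← rpow_add (by positivity)]; ring_nf

lemma summable_abs_maternCoeff (hκ : 0 < κ) (β : Fin n → ℕ) (hβ : (∑ i, β i : ℕ) + n < 2 * ν) :
    Summable fun k => |maternCoeff n κ ν β k| := by
  simpa using summable_abs_maternCoeff_mul hκ β le_rfl (by simpa using hβ)

end MaternCoeff

def cosSeries {n : ℕ} (a : (Fin n → ℤ) → ℝ) (φ : ℝ) (h : Fin n → ℝ) : ℝ :=
  ∑' k, a k * cos (2 * π * ∑ i, k i * h i + φ)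

section CosSeries

variable {n : ℕ} {a : (Fin n → ℤ) → ℝ}

lemma summable_mul_cos (ha : Summable fun k => |a k|) (θ : (Fin n → ℤ) → ℝ) :
    Summable fun k => a k * cos (θ k) :=
  .of_norm_bounded ha fun k => by
    simpa [abs_mul] using mul_le_mul_of_nonneg_left (abs_cos_le_one (θ k)) (abs_nonneg (a k))

lemma pd_cosSeries (φ : ℝ) (i : Fin n) (ha : Summable fun k => |a k|)
    (ha' : Summable fun k => |2 * π * k i * a k|) :
    pd i (cosSeries a φ) = cosSeries (fun k => 2 * π * k i * a k) (φ + π / 2) := by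
  funext x
  set θ : (Fin n → ℤ) → ℝ := fun k => 2 * π * ∑ j, k j * x j + φ
  have hline : ∀ t : ℝ, cosSeries a φ (x + t • Pi.single i 1) =
      ∑' k, a k * cos (2 * π * k i * t + θ k) := fun t => tsum_congr fun k => by
    congr 2
    simp [θ, mul_add, sum_add_distrib, Pi.single_apply]
    ring
  have hderiv : ∀ k t, HasDerivAt (fun t => a k * cos (2 * π * k i * t + θ k))
      (2 * π * k i * a k * cos (2 * π * k i * t + θ k + π / 2)) t := fun k t => by
    rw [cos_add_pi_div_two]
    refine ((((hasDerivAt_id' t).const_mul (2 * π * k i)).add_const (θ k)).cos.const_mul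
      (a k)).congr_deriv ?_
    ring
  have hbound : ∀ k t, ‖2 * π * k i * a k * cos (2 * π * k i * t + θ k + π / 2)‖ ≤
      |2 * π * k i * a k| := fun k t => by
    simpa [abs_mul] using
      mul_le_mul_of_nonneg_left (abs_cos_le_one _) (abs_nonneg (2 * π * k i * a k))
  have hsum := hasDerivAt_tsum ha' hderiv hbound (y₀ := 0) (summable_mul_cos ha _) 0
  rw [pd, lineDeriv]
  simp only [hline]
  rw [hsum.deriv]
  simp only [cosSeries, θ, mul_zero, zero_add, add_assoc]

end CosSeries

/-- The closed form of `∂^β ρ`, valid while `|β| + n < 2ν`. -/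
def maternDeriv (n : ℕ) (κ ν : ℝ) (β : Fin n → ℕ) : (Fin n → ℝ) → ℝ :=
  cosSeries (maternCoeff n κ ν β) ((∑ i, β i : ℕ) * (π / 2))

section MaternDeriv

variable {n : ℕ} {κ ν : ℝ}

lemma matRho_eq_maternDeriv_zero : matRho n κ ν = maternDeriv n κ ν 0 := by
  funext h
  simp [matRho, maternDeriv, cosSeries, maternCoeff]

lemma sum_add_single_apply (β : Fin n → ℕ) (i : Fin n) (m : ℕ) :
    ∑ j, (β + Pi.single i m : Fin n → ℕ) j = ∑ j, β j + m := by
  simp [sum_add_distrib]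

lemma pd_maternDeriv (hκ : 0 < κ) (β : Fin n → ℕ) (i : Fin n)
    (hβ : (∑ j, β j : ℕ) + 1 + n < 2 * ν) :
    pd i (maternDeriv n κ ν β) = maternDeriv n κ ν (β + Pi.single i 1) := by
  have hsucc := summable_abs_maternCoeff (ν := ν) hκ (β + Pi.single i 1)
    (by rw [sum_add_single_apply, Nat.cast_succ]; linarith)
  simp only [maternCoeff_add_single] at hsucc
  rw [maternDeriv, pd_cosSeries _ i (summable_abs_maternCoeff hκ β (by linarith)) hsucc,
    maternDeriv, sum_add_single_apply]
  congr 1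
  · funext k
    rw [maternCoeff_add_single]
  · push_cast
    ring

lemma iterate_pd_maternDeriv (hκ : 0 < κ) (i : Fin n) :
    ∀ (m : ℕ) (β : Fin n → ℕ), (∑ j, β j : ℕ) + m + n < 2 * ν →
      (pd i)^[m] (maternDeriv n κ ν β) = maternDeriv n κ ν (β + Pi.single i m)
  | 0, β, _ => by simp
  | m + 1, β, hβ => by
    have hβ' : (∑ j, (β + Pi.single i 1 : Fin n → ℕ) j : ℕ) + m + n < 2 * ν := by
      rw [sum_add_single_apply, Nat.cast_succ]; rw [Nat.cast_succ] at hβ; linarith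
    rw [Function.iterate_succ_apply, pd_maternDeriv hκ β i (by rw [Nat.cast_succ] at hβ; linarith),
      iterate_pd_maternDeriv hκ i m _ hβ', add_assoc, ← Pi.single_add, add_comm 1 m]

lemma foldr_iterate_pd_maternDeriv (hκ : 0 < κ) (α : Fin n → ℕ) :
    ∀ (l : List (Fin n)) (β : Fin n → ℕ),
      (∑ j, (β + (l.map fun i => Pi.single i (α i)).sum) j : ℕ) + n < 2 * ν →
      l.foldr (fun i g => (pd i)^[α i] g) (maternDeriv n κ ν β) =
        maternDeriv n κ ν (β + (l.map fun i => Pi.single i (α i)).sum)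
  | [], β, _ => by simp
  | i :: l, β, hβ => by
    have hsplit : β + ((i :: l).map fun i => Pi.single i (α i)).sum =
        β + (l.map fun i => Pi.single i (α i)).sum + Pi.single i (α i) := by
      simp only [List.map_cons, List.sum_cons]
      abel
    rw [hsplit, sum_add_single_apply, Nat.cast_add] at hβ
    rw [List.foldr_cons, foldr_iterate_pd_maternDeriv hκ α l β ?_,
      iterate_pd_maternDeriv hκ i (α i) _ hβ, hsplit]
    linarith [(α i).cast_nonneg (α := ℝ)]

lemma mpd_matRho (hκ : 0 < κ) (α : Fin n → ℕ) (hα : (∑ i, α i : ℕ) + n < 2 * ν) :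
    mpd α (matRho n κ ν) = maternDeriv n κ ν α := by
  have hα' : ((List.finRange n).map fun i => Pi.single i (α i)).sum = α := by
    rw [← Fin.sum_univ_def, univ_sum_single]
  rw [mpd, matRho_eq_maternDeriv_zero,
    foldr_iterate_pd_maternDeriv hκ α _ 0 (by rwa [hα', zero_add]), hα', zero_add]

end MaternDeriv

/-- Interpolates between `|cos x - cos y| ≤ |x - y|` and `|cos x - cos y| ≤ 2`. -/
lemma abs_cos_sub_cos_le_rpow {ε : ℝ} (hε0 : 0 ≤ ε) (hε1 : ε ≤ 1) (x y : ℝ) :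
    |cos x - cos y| ≤ 2 ^ (1 - ε) * |x - y| ^ ε := by
  rcases le_total |x - y| 2 with hxy | hxy
  · calc |cos x - cos y| ≤ |x - y| := abs_cos_sub_cos_le x y
      _ = |x - y| ^ (1 - ε) * |x - y| ^ ε := by
          rw [← rpow_add' (abs_nonneg _) (by norm_num), sub_add_cancel, rpow_one]
      _ ≤ 2 ^ (1 - ε) * |x - y| ^ ε := by gcongr
  · calc |cos x - cos y| ≤ |cos x| + |cos y| := abs_sub _ _
      _ ≤ 2 := by linarith [abs_cos_le_one x, abs_cos_le_one y]
      _ = 2 ^ (1 - ε) * 2 ^ ε := by rw [← rpow_add two_pos, sub_add_cancel, rpow_one]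
      _ ≤ 2 ^ (1 - ε) * |x - y| ^ ε := by gcongr

lemma abs_sum_mul_sub_sum_mul_le {n : ℕ} (k : Fin n → ℤ) (h h' : Fin n → ℝ) :
    |∑ i, k i * h i - ∑ i, k i * h' i| ≤
      √(1 + ∑ i, (k i : ℝ) ^ 2) * √(∑ i, (h i - h' i) ^ 2) := by
  rw [← sum_sub_distrib, ← sqrt_sq_eq_abs]
  simp only [← mul_sub]
  calc √((∑ i, k i * (h i - h' i)) ^ 2)
      ≤ √(∑ i, (k i : ℝ) ^ 2) * √(∑ i, (h i - h' i) ^ 2) := by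
        rw [← sqrt_mul (sum_nonneg fun i _ => sq_nonneg _)]
        exact sqrt_le_sqrt (sum_mul_sq_le_sq_mul_sq _ _ _)
    _ ≤ √(1 + ∑ i, (k i : ℝ) ^ 2) * √(∑ i, (h i - h' i) ^ 2) := by gcongr; linarith

lemma cosSeries_holder {n : ℕ} {a : (Fin n → ℤ) → ℝ} (φ : ℝ) {ε : ℝ} (hε0 : 0 ≤ ε)
    (hε1 : ε ≤ 1) (ha : Summable fun k => |a k| * (1 + ∑ i, (k i : ℝ) ^ 2) ^ (ε / 2)) :
    ∃ C > 0, ∀ h h' : Fin n → ℝ,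
      |cosSeries a φ h - cosSeries a φ h'| ≤ C * √(∑ i, (h i - h' i) ^ 2) ^ ε := by
  set w : (Fin n → ℤ) → ℝ := fun k => |a k| * (1 + ∑ i, (k i : ℝ) ^ 2) ^ (ε / 2)
  have hw : ∀ k, |a k| ≤ w k := fun k =>
    le_mul_of_one_le_right (abs_nonneg _)
      (one_le_rpow (by linarith [sum_nonneg fun i (_ : i ∈ univ) => sq_nonneg (k i : ℝ)])
        (by linarith))
  have ha₀ : Summable fun k => |a k| := .of_nonneg_of_le (fun k => abs_nonneg _) hw ha
  set K := 2 ^ (1 - ε) * (2 * π) ^ ε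
  refine ⟨K * ∑' k, w k + 1, by positivity, fun h h' => ?_⟩
  set D := √(∑ i, (h i - h' i) ^ 2)
  set θ : (Fin n → ℝ) → (Fin n → ℤ) → ℝ := fun h k => 2 * π * ∑ i, k i * h i + φ
  have hterm : ∀ k, ‖a k * cos (θ h k) - a k * cos (θ h' k)‖ ≤ K * D ^ ε * w k := fun k => by
    have hphase : |θ h k - θ h' k| ≤ 2 * π * (√(1 + ∑ i, (k i : ℝ) ^ 2) * D) := by
      rw [show θ h k - θ h' k = 2 * π * (∑ i, k i * h i - ∑ i, k i * h' i) by simp [θ]; ring,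
        abs_mul, abs_of_pos two_pi_pos]
      gcongr
      exact abs_sum_mul_sub_sum_mul_le k h h'
    calc ‖a k * cos (θ h k) - a k * cos (θ h' k)‖ = |a k| * |cos (θ h k) - cos (θ h' k)| := by
          rw [norm_eq_abs, ← mul_sub, abs_mul]
      _ ≤ |a k| * (2 ^ (1 - ε) * (2 * π * (√(1 + ∑ i, (k i : ℝ) ^ 2) * D)) ^ ε) := by
          gcongr
          exact (abs_cos_sub_cos_le_rpow hε0 hε1 _ _).trans (by gcongr)
      _ = K * D ^ ε * w k := by
          rw [mul_rpow (by positivity) (by positivity), mul_rpow (sqrt_nonneg _) (sqrt_nonneg _),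
            sqrt_eq_rpow, ← rpow_mul (by positivity), one_div_mul_eq_div]
          ring
  calc |cosSeries a φ h - cosSeries a φ h'|
      = ‖∑' k, (a k * cos (θ h k) - a k * cos (θ h' k))‖ := by
        rw [(summable_mul_cos ha₀ _).tsum_sub (summable_mul_cos ha₀ _), norm_eq_abs]
        rfl
    _ ≤ ∑' k, K * D ^ ε * w k := tsum_of_norm_bounded (ha.mul_left _).hasSum hterm
    _ = K * (∑' k, w k) * D ^ ε := by rw [tsum_mul_left]; ring
    _ ≤ (K * ∑' k, w k + 1) * D ^ ε := by gcongr; linarith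

theorem stmt5_general (n : ℕ) (κ ν : ℝ) (hκ : 0 < κ)
    (α : Fin n → ℕ) (hα : (∑ i, α i) = 2 * n)
    (ε : ℝ) (hε0 : 0 < ε) (hε : ε < min 1 (ν - 3 * (n : ℝ) / 2)) :
    ∃ C > (0 : ℝ), ∀ h h' : Fin n → ℝ,
      |mpd α (matRho n κ ν) h - mpd α (matRho n κ ν) h'| ≤
        C * (Real.sqrt (∑ i, (h i - h' i) ^ 2)) ^ ε := by
  obtain ⟨hε1, hεν⟩ := lt_min_iff.mp hε
  have hα' : ((∑ i, α i : ℕ) : ℝ) = 2 * n := by exact_mod_cast hα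
  rw [mpd_matRho hκ α (by linarith)]
  exact cosSeries_holder _ hε0.le hε1.le
    (summable_abs_maternCoeff_mul hκ α hε0.le (by linarith))

/-- For `ν > 3n/2`, each order-`2n` partial derivative of the torus Matérn covariance is
globally `ε`-Hölder for every `0 < ε < min(1, ν − 3n/2)`. -/
theorem stmt5 (n : ℕ) (hn : 1 ≤ n) (κ ν : ℝ) (hκ : 0 < κ) (hν : 3 * (n : ℝ) / 2 < ν)
    (α : Fin n → ℕ) (hα : (∑ i, α i) = 2 * n)
    (ε : ℝ) (hε0 : 0 < ε) (hε : ε < min 1 (ν - 3 * (n : ℝ) / 2)) :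
    ∃ C > (0 : ℝ), ∀ h h' : Fin n → ℝ,
      |mpd α (matRho n κ ν) h - mpd α (matRho n κ ν) h'| ≤
        C * (Real.sqrt (∑ i, (h i - h' i) ^ 2)) ^ ε :=
  stmt5_general n κ ν hκ α hα ε hε0 hε

end
end

section
/- Let d ≥ 1, let g : ℤ^d → ℂ be a polynomially bounded sequence (|g(k)| ≤ C_g (1+|k|²)^{M_g} for some C_g > 0, M_g ∈ ℕ), and let μ_X : ℤ^d → [0,∞) be slow-growing, i.e. Σ_{k ∈ ℤ^d} (1+|k|²)^{−M} μ_X(k) < ∞ for some M ∈ ℕ. Then: (i) there exists a slow-growing μ_U : ℤ^d → [0,∞) satisfying |g(k)|² μ_U(k) = μ_X(k) for all k ∈ ℤ^d if and only if μ_X(k) = 0 whenever g(k) = 0 and there exists N ∈ ℕ with Σ_{k : g(k) ≠ 0} μ_X(k) / (|g(k)|² (1+|k|²)^N) < ∞; (ii) in that case, the sequence μ_U(k) = μ_X(k)/|g(k)|² for g(k) ≠ 0 and μ_U(k) = 0 for g(k) = 0 is slow-growing and satisfies |g|² μ_U = μ_X; (iii) this μ_U is the unique slow-growing solution of |g(k)|²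 μ_U(k) = μ_X(k) for all k if and only if |g(k)| > 0 for every k ∈ ℤ^d. -/
noncomputable section

/-- `1 + |k|²` for `k ∈ ℤ^d`. -/
def q (d : ℕ) (k : Fin d → ℤ) : ℝ := 1 + ∑ i, ((k i : ℝ)) ^ 2

/-- A (weight sequence of a) positive measure on `ℤ^d` is slow-growing if
`Σ_k (1+|k|²)^{−M} μ(k) < ∞` for some `M ∈ ℕ`. -/
def SlowGrowing (d : ℕ) (μ : (Fin d → ℤ) → ℝ) : Prop :=
  ∃ M : ℕ, Summable (fun k : Fin d → ℤ => μ k / q d k ^ M)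

/-- Existence and uniqueness of stationary solutions at the spectral level: solvability of
`|g(k)|² μ_U(k) = μ_X(k)` within slow-growing spectral measures, the explicit solution, and
its uniqueness exactly when `g` never vanishes. -/
theorem stmt13 (d : ℕ) (hd : 1 ≤ d) (g : (Fin d → ℤ) → ℂ)
    (hg : ∃ Cg > (0 : ℝ), ∃ Mg : ℕ, ∀ k, ‖g k‖ ≤ Cg * q d k ^ Mg)
    (μX : (Fin d → ℤ) → ℝ) (hμX0 : ∀ k, 0 ≤ μX k) (hμX : SlowGrowing d μX) :
    -- (i) existence criterion
    ((∃ μU : (Fin d → ℤ) → ℝ, (∀ k, 0 ≤ μU k) ∧ SlowGrowing d μU ∧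
        ∀ k, ‖g k‖ ^ 2 * μU k = μX k) ↔
      ((∀ k, g k = 0 → μX k = 0) ∧ ∃ N : ℕ,
        Summable (fun k : Fin d → ℤ =>
          if g k = 0 then 0 else μX k / (‖g k‖ ^ 2 * q d k ^ N)))) ∧
    -- (ii) the explicit solution is slow-growing and solves the equation
    (((∀ k, g k = 0 → μX k = 0) ∧ ∃ N : ℕ,
        Summable (fun k : Fin d → ℤ =>
          if g k = 0 then 0 else μX k / (‖g k‖ ^ 2 * q d k ^ N))) →
      ((∀ k, 0 ≤ (if g k = 0 then 0 else μX k / ‖g k‖ ^ 2)) ∧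
        SlowGrowing d (fun k => if g k = 0 then 0 else μX k / ‖g k‖ ^ 2) ∧
        ∀ k, ‖g k‖ ^ 2 * (if g k = 0 then 0 else μX k / ‖g k‖ ^ 2) = μX k)) ∧
    -- (iii) uniqueness in the slow-growing class iff `g` never vanishes
    (((∀ k, g k = 0 → μX k = 0) ∧ ∃ N : ℕ,
        Summable (fun k : Fin d → ℤ =>
          if g k = 0 then 0 else μX k / (‖g k‖ ^ 2 * q d k ^ N))) →
      ((∀ μ : (Fin d → ℤ) → ℝ,
          ((∀ k, 0 ≤ μ k) ∧ SlowGrowing d μ ∧ ∀ k, ‖g k‖ ^ 2 * μ k = μX k) →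
          μ = fun k => if g k = 0 then 0 else μX k / ‖g k‖ ^ 2) ↔
        (∀ k, g k ≠ 0))) := by
  have hq : ∀ k, (0:ℝ) < q d k := by
    intro k
    have : (0:ℝ) ≤ ∑ i, ((k i : ℝ)) ^ 2 := Finset.sum_nonneg fun i _ => sq_nonneg _
    unfold q; linarith
  have hqpow : ∀ (M : ℕ) k, (0:ℝ) < q d k ^ M := fun M k => pow_pos (hq k) M
  have hgnorm : ∀ k, g k ≠ 0 → (0:ℝ) < ‖g k‖ ^ 2 := by
    intro k hk
    exact pow_pos (norm_pos_iff.mpr hk) 2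
  -- part (ii) as a have
  have hii : ((∀ k, g k = 0 → μX k = 0) ∧ ∃ N : ℕ,
        Summable (fun k : Fin d → ℤ =>
          if g k = 0 then 0 else μX k / (‖g k‖ ^ 2 * q d k ^ N))) →
      ((∀ k, 0 ≤ (if g k = 0 then 0 else μX k / ‖g k‖ ^ 2)) ∧
        SlowGrowing d (fun k => if g k = 0 then 0 else μX k / ‖g k‖ ^ 2) ∧
        ∀ k, ‖g k‖ ^ 2 * (if g k = 0 then 0 else μX k / ‖g k‖ ^ 2) = μX k) := by
    rintro ⟨h0, N, hN⟩
    refine ⟨?_, ⟨N, ?_⟩, ?_⟩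
    · intro k
      by_cases hk : g k = 0
      · simp [hk]
      · simp only [hk, if_false]
        exact div_nonneg (hμX0 k) (hgnorm k hk).le
    · refine hN.congr fun k => ?_
      by_cases hk : g k = 0
      · simp [hk]
      · simp only [hk, if_false]
        rw [div_div]
    · intro k
      by_cases hk : g k = 0
      · simp [hk, h0 k hk]
      · simp only [hk, if_false]
        rw [mul_comm, div_mul_cancel₀ _ (hgnorm k hk).ne']
  refine ⟨?_, hii, ?_⟩
  · constructor
    · rintro ⟨μU, hpos, ⟨M, hM⟩, heq⟩
      constructor
      · intro k hk
        have := heq k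
        simp [hk] at this
        exact this.symm
      · refine ⟨M, Summable.of_nonneg_of_le (fun k => ?_) (fun k => ?_) hM⟩
        · by_cases hk : g k = 0
          · simp [hk]
          · simp only [hk, if_false]
            exact div_nonneg (hμX0 k) (mul_nonneg (hgnorm k hk).le (hqpow M k).le)
        · by_cases hk : g k = 0
          · simp only [hk, if_true]
            exact div_nonneg (hpos k) (hqpow M k).le
          · simp only [hk, if_false]
            rw [← heq k, mul_div_mul_left _ _ (hgnorm k hk).ne']
    · intro h
      obtain ⟨h1, h2, h3⟩ := hii h
      exact ⟨_, h1, h2, h3⟩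
  · intro h
    constructor
    · intro huniq k
      by_contra hk
      obtain ⟨hpos, ⟨N, hN⟩, heq⟩ := hii h
      set μU : (Fin d → ℤ) → ℝ := fun k => if g k = 0 then 0 else μX k / ‖g k‖ ^ 2 with hμU
      set μ' : (Fin d → ℤ) → ℝ := fun j => μU j + (if j = k then 1 else 0) with hμ'
      have hμ'eq : μ' = μU := by
        apply huniq
        refine ⟨fun j => ?_, ⟨N, ?_⟩, fun j => ?_⟩
        · by_cases hj : j = k
          · subst hj
            simp [hμ', hμU, hk]
          · simpa [hμ', hj] using hpos j
        · have hsum2 : Summable (fun j : Fin d → ℤ =>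
              (if j = k then (1:ℝ) else 0) / q d j ^ N) := by
            apply summable_of_ne_finset_zero (s := {k})
            intro j hj
            simp at hj
            simp [hj]
          have := hN.add hsum2
          refine this.congr fun j => ?_
          simp [hμ', add_div]
        · have h2 : ‖g j‖ ^ 2 * (if j = k then (1:ℝ) else 0) = 0 := by
            by_cases hj : j = k
            · subst hj; simp [hk]
            · simp [hj]
          calc ‖g j‖ ^ 2 * μ' j = ‖g j‖ ^ 2 * μU j + ‖g j‖ ^ 2 * (if j = k then 1 else 0) := by
                simp [hμ', mul_add]
            _ = ‖g j‖ ^ 2 * μU j := by rw [h2, add_zero]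
            _ = μX j := heq j
      have := congrFun hμ'eq k
      simp [hμ', hμU, hk] at this
    · rintro hgne μ ⟨hpos, hsg, heq⟩
      funext k
      have hk := hgne k
      simp only [hk, if_false]
      rw [eq_div_iff (hgnorm k hk).ne', mul_comm]
      exact heq k

end
end
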